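/- arXiv:1703.06314 — 2 statements merged into one kernel-verified Lean document; each statement's English description precedes it below -/
import Mathlib

section
/- (Local-lemma existence of a good coloring.) Let q be a prime power and n ≥ 2. If e · 4q² · 2n(q+1) · (1 − 1/n)^{q−1} ≤ 1 (where e is the base of the natural logarithm) and moreover n²·(1 − 1/n²)^{q²} ≤ 2n(q+1)·(1 − 1/n)^{q−1}, then there exists a good coloring f : D × D → Fin n. -/
/-- The "slope `s`" relation on the affine plane `F × F`.  `some s` is the
relation of lines with slope `s`; `none` is the relation `R_∞` of vertical lines. -/
def slopeRel {F : Type*} [Field F] (s : Option F) (p r : F × F) : Prop :=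
  match s with
  | some s => p.1 ≠ r.1 ∧ r.2 - p.2 = s * (r.1 - p.1)
  | none => p.1 = r.1 ∧ p.2 ≠ r.2

/-- A coloring `f : D × D → Fin n` (of the edges between `D = F × F` and a disjoint
copy of `D`) is good if it satisfies the witness conditions (1a), (1b), (2a), (2b)
needed to turn the standard representation of `𝔏(q,1)` into one of `𝔏(q,n)`. -/
def IsGood {F : Type*} [Field F] {n : ℕ} (f : (F × F) × (F × F) → Fin n) : Prop :=
  (∀ u v : F × F, u ≠ v → ∀ i j : Fin n, ∃ z : F × F, f (u, z) = i ∧ f (v, z) = j) ∧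
  (∀ u v : F × F, u ≠ v → ∀ i j : Fin n, ∃ z : F × F, f (z, u) = i ∧ f (z, v) = j) ∧
  (∀ u z : F × F, ∀ s : Option F, ∀ j : Fin n,
    ∃ w : F × F, slopeRel s u w ∧ f (w, z) = j) ∧
  (∀ u z : F × F, ∀ s : Option F, ∀ j : Fin n,
    ∃ w : F × F, slopeRel s z w ∧ f (u, w) = j)

/-!
Look for `f` of the form `f (w, z) = χ (w + z)` with `χ : F × F → Fin n`. Translating by `u`
turns (1a) and (1b) into: for every `δ ≠ 0` and all colors `i, j` some `x` has `χ x = i` and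
`χ (x + δ) = j`; and (2a), (2b) into: every punctured line through every point sees every color.
For a uniformly random `χ`, a punctured line misses a color with probability `(1 - 1/n)^(q-1)`.
For `δ ≠ 0`, a set `T` of at least `q²/3` points with `T ∩ (T + δ) = ∅` yields that many
independent pairs `(x, x + δ)`, so `(i, j)` is missed with probability at most
`(1 - 1/n²)^(q²/3)`. A union bound over the `q²(q+1)n + q²n²` events finishes: the hypothesis
bounds the first sum by `1/(8e)`, and it forces `q/n ≥ 6`, which bounds the second by `1/2`.
-/

open Finset

section Counting

variable {V β : Type*} [Fintype V] [Fintype β] [DecidableEq V] [DecidableEq β]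

theorem card_filter_forall_mem_ne (W : Finset V) (j : β) :
    (#{χ : V → β | ∀ y ∈ W, χ y ≠ j} : ℝ) =
      (Fintype.card β : ℝ) ^ Fintype.card V * (1 - 1 / Fintype.card β) ^ #W := by
  have : Nonempty β := ⟨j⟩
  have hfilter : ({χ : V → β | ∀ y ∈ W, χ y ≠ j} : Finset (V → β)) =
      Fintype.piFinset fun y => if y ∈ W then univ.erase j else univ := by
    ext χ
    simp only [mem_filter, mem_univ, true_and, Fintype.mem_piFinset]
    refine forall_congr' fun y => ?_
    split_ifs <;> simp [*]
  have hfactor (y : V) : ((#(if y ∈ W then univ.erase j else univ) : ℕ) : ℝ) =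
      Fintype.card β * (if y ∈ W then 1 - 1 / (Fintype.card β : ℝ) else 1) := by
    split_ifs
    · rw [card_erase_of_mem (mem_univ j), card_univ,
        Nat.cast_sub Fintype.card_pos]
      field_simp
      push_cast
      ring
    · simp
  rw [hfilter, Fintype.card_piFinset, Nat.cast_prod, prod_congr rfl fun y _ => hfactor y,
    prod_mul_distrib, prod_const, card_univ, prod_ite_mem, univ_inter, prod_const]

theorem card_filter_forall_mem_not_and_le (T : Finset V) {g : V → V} (hg : g.Injective)
    (hT : Disjoint T (T.image g)) (i j : β) :
    (#{χ : V → β | ∀ x ∈ T, ¬(χ x = i ∧ χ (g x) = j)} : ℝ) ≤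
      (Fintype.card β : ℝ) ^ Fintype.card V * (1 - 1 / (Fintype.card β : ℝ) ^ 2) ^ #T := by
  have : Nonempty β := ⟨i⟩
  set S : Finset (V → β) := {χ | ∀ x ∈ T, ¬(χ x = i ∧ χ (g x) = j)}
  set U := T ∪ T.image g
  have hU : #U = 2 * #T := by
    rw [card_union_of_disjoint hT, card_image_of_injective _ hg]; ring
  have hUV : 2 * #T ≤ Fintype.card V := hU ▸ card_le_univ U
  let φ : (V → β) → (T → β × β) × (↥Uᶜ → β) := fun χ =>
    (fun x => (χ x, χ (g x)), fun x => χ x)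
  have hφ : Set.InjOn φ S := by
    intro χ _ χ' _ h
    simp only [φ, Prod.mk.injEq, funext_iff, Subtype.forall] at h
    funext y
    by_cases hy : y ∈ U
    · rcases mem_union.1 hy with hyT | hyg
      · exact (h.1 y hyT).1
      · obtain ⟨x, hx, rfl⟩ := mem_image.1 hyg
        exact (h.1 x hx).2
    · exact h.2 y (mem_compl.2 hy)
  have hmaps : ∀ χ ∈ S,
      φ χ ∈ Fintype.piFinset (fun _ => univ.erase (i, j)) ×ˢ univ := by
    intro χ hχ
    simp only [S, mem_filter, mem_univ, true_and] at hχ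
    simp only [mem_product, Fintype.mem_piFinset, mem_erase, ne_eq, Prod.mk.injEq, mem_univ,
      and_true, φ]
    exact fun x => hχ x x.2
  have hcard := card_le_card_of_injOn φ hmaps hφ
  rw [card_product, Fintype.card_piFinset, prod_const, card_erase_of_mem (mem_univ _), card_univ,
    card_univ, card_univ, Fintype.card_fun, Fintype.card_coe, Fintype.card_coe, card_compl, hU,
    Fintype.card_prod] at hcard
  calc (#S : ℝ)
      ≤ (((Fintype.card β * Fintype.card β - 1) ^ #T *
          Fintype.card β ^ (Fintype.card V - 2 * #T) : ℕ) : ℝ) := by exact_mod_cast hcard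
    _ = (Fintype.card β : ℝ) ^ Fintype.card V * (1 - 1 / (Fintype.card β : ℝ) ^ 2) ^ #T := by
      have hβ : (Fintype.card β : ℝ) ≠ 0 := by positivity
      have hpair : (Fintype.card β : ℝ) * Fintype.card β - 1 =
          (Fintype.card β : ℝ) ^ 2 * (1 - 1 / (Fintype.card β : ℝ) ^ 2) := by
        field_simp
      have h1 : 1 ≤ Fintype.card β * Fintype.card β := Nat.one_le_iff_ne_zero.2 (by positivity)
      obtain ⟨m, hm⟩ := Nat.exists_eq_add_of_le hUV
      rw [hm, Nat.add_sub_cancel_left]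
      push_cast [Nat.cast_sub h1]
      rw [hpair, mul_pow, pow_add, pow_mul]
      ring

end Counting

theorem exists_forall_notMem_of_card_le {ι κ α : Type*} [Fintype ι] [Fintype κ] [Fintype α]
    [DecidableEq α] (A : ι → Finset α) (B : κ → Finset α) {a b : ℝ}
    (hA : ∀ i, (#(A i) : ℝ) ≤ a) (hB : ∀ k, (#(B k) : ℝ) ≤ b)
    (h : Fintype.card ι * a + Fintype.card κ * b < Fintype.card α) :
    ∃ x, (∀ i, x ∉ A i) ∧ ∀ k, x ∉ B k := by
  by_contra! hcover
  have hsub : (univ : Finset α) ⊆ univ.biUnion A ∪ univ.biUnion B := fun x _ => by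
    by_cases hx : ∀ i, x ∉ A i
    · obtain ⟨k, hk⟩ := hcover x hx
      exact mem_union_right _ (mem_biUnion.2 ⟨k, mem_univ k, hk⟩)
    · obtain ⟨i, hi⟩ := not_forall_not.1 hx
      exact mem_union_left _ (mem_biUnion.2 ⟨i, mem_univ i, hi⟩)
  have hcard : (Fintype.card α : ℝ) ≤ ∑ i, (#(A i) : ℝ) + ∑ k, (#(B k) : ℝ) := by
    rw [← card_univ]
    exact_mod_cast (card_le_card hsub).trans
      ((card_union_le _ _).trans (add_le_add card_biUnion_le card_biUnion_le))
  have hsumA : ∑ i, (#(A i) : ℝ) ≤ Fintype.card ι * a := by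
    simpa using sum_le_sum fun i (_ : i ∈ univ) => hA i
  have hsumB : ∑ k, (#(B k) : ℝ) ≤ Fintype.card κ * b := by
    simpa using sum_le_sum fun k (_ : k ∈ univ) => hB k
  linarith

theorem exists_disjoint_image_add_three_mul_card_ge {G : Type*} [AddGroup G] [Fintype G]
    [DecidableEq G] {δ : G} (hδ : δ ≠ 0) :
    ∃ T : Finset G, Disjoint T (T.image (· + δ)) ∧ Fintype.card G ≤ 3 * #T := by
  let admissible : Finset (Finset G) := {T | ∀ x ∈ T, x + δ ∉ T}
  obtain ⟨T, hT, hmax⟩ := exists_max_image admissible card ⟨∅, by simp [admissible]⟩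
  simp only [admissible, mem_filter, mem_univ, true_and] at hT hmax
  have hdisj : Disjoint T (T.image (· + δ)) := by
    simp only [disjoint_left, mem_image, not_exists, not_and]
    rintro _ hx x hxT rfl
    exact hT x hxT hx
  refine ⟨T, hdisj, ?_⟩
  -- otherwise `insert y T` would be a larger admissible set
  have hcover : ∀ y, y ∈ T ∨ y + δ ∈ T ∨ y - δ ∈ T := by
    intro y
    by_contra! hy
    have hins : ∀ x ∈ insert y T, x + δ ∉ insert y T := by
      simp only [mem_insert, forall_eq_or_imp, not_or]
      refine ⟨⟨by simpa using hδ, hy.2.1⟩, fun x hx => ⟨fun hxy => hy.2.2 ?_, hT x hx⟩⟩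
      rwa [← hxy, add_sub_cancel_right]
    have := hmax _ hins
    rw [card_insert_of_notMem hy.1] at this
    omega
  have hsub : (univ : Finset G) ⊆ T ∪ T.image (· - δ) ∪ T.image (· + δ) := by
    intro y _
    simp only [mem_union, mem_image]
    rcases hcover y with h | h | h
    · exact Or.inl (Or.inl h)
    · exact Or.inl (Or.inr ⟨y + δ, h, add_sub_cancel_right y δ⟩)
    · exact Or.inr ⟨y - δ, h, sub_add_cancel y δ⟩
  calc Fintype.card G = #(univ : Finset G) := card_univ.symm
    _ ≤ #(T ∪ T.image (· - δ) ∪ T.image (· + δ)) := card_le_card hsub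
    _ ≤ #T + #T + #T := by
      grw [card_union_le, card_union_le, card_image_le, card_image_le]
    _ = 3 * #T := by ring

section AffinePlane

variable {F : Type*} [Field F]

theorem slopeRel_add_right (s : Option F) (a b c : F × F) :
    slopeRel s (a + c) (b + c) ↔ slopeRel s a b := by
  cases s <;> simp [slopeRel]

open Classical in
theorem card_filter_slopeRel [Fintype F] (s : Option F) (p : F × F) :
    #{y | slopeRel s p y} = Fintype.card F - 1 := by
  rw [← card_univ]
  cases s with
  | none =>
    rw [← card_erase_of_mem (mem_univ p.2)]
    refine card_bij' (fun y _ => y.2) (fun b _ => (p.1, b)) ?_ ?_ ?_ ?_ <;>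
      simp +contextual only [mem_filter] <;> simp +contextual [slopeRel, eq_comm]
  | some m =>
    rw [← card_erase_of_mem (mem_univ p.1)]
    refine card_bij' (fun y _ => y.1) (fun a _ => (a, p.2 + m * (a - p.1))) ?_ ?_ ?_ ?_ <;>
      simp +contextual only [mem_filter] <;> simp +contextual [slopeRel, eq_comm]

open Classical in
theorem card_filter_forall_slopeRel_ne {β : Type*} [Fintype F] [Fintype β] [DecidableEq β]
    (s : Option F) (p : F × F) (j : β) :
    (#{χ : F × F → β | ∀ y, slopeRel s p y → χ y ≠ j} : ℝ) =
      (Fintype.card β : ℝ) ^ Fintype.card F ^ 2 *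
        (1 - 1 / Fintype.card β) ^ (Fintype.card F - 1) := by
  have := card_filter_forall_mem_ne {y | slopeRel s p y} j
  simp only [mem_filter, mem_univ, true_and, card_filter_slopeRel, Fintype.card_prod, ← sq]
    at this
  convert this

end AffinePlane

theorem card_filter_forall_not_and_add_le {G β : Type*} [AddGroup G] [Fintype G] [DecidableEq G]
    [Fintype β] [DecidableEq β] {δ : G} (hδ : δ ≠ 0) (i j : β) {t : ℕ}
    (ht : 3 * t ≤ Fintype.card G + 2) :
    (#{χ : G → β | ∀ x, ¬(χ x = i ∧ χ (x + δ) = j)} : ℝ) ≤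
      (Fintype.card β : ℝ) ^ Fintype.card G * (1 - 1 / (Fintype.card β : ℝ) ^ 2) ^ t := by
  have hβ : 1 ≤ Fintype.card β := Fintype.card_pos_iff.2 ⟨i⟩
  obtain ⟨T, hT, hTcard⟩ := exists_disjoint_image_add_three_mul_card_ge hδ
  have hsub : ({χ | ∀ x, ¬(χ x = i ∧ χ (x + δ) = j)} : Finset (G → β)) ⊆
      ({χ | ∀ x ∈ T, ¬(χ x = i ∧ χ (x + δ) = j)} : Finset (G → β)) :=
    monotone_filter_right _ fun _ _ hχ x _ => hχ x
  calc (#{χ : G → β | ∀ x, ¬(χ x = i ∧ χ (x + δ) = j)} : ℝ)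
      ≤ #{χ : G → β | ∀ x ∈ T, ¬(χ x = i ∧ χ (x + δ) = j)} := by
        exact_mod_cast card_le_card hsub
    _ ≤ (Fintype.card β : ℝ) ^ Fintype.card G * (1 - 1 / (Fintype.card β : ℝ) ^ 2) ^ #T :=
        card_filter_forall_mem_not_and_le T (add_left_injective δ) hT i j
    _ ≤ (Fintype.card β : ℝ) ^ Fintype.card G * (1 - 1 / (Fintype.card β : ℝ) ^ 2) ^ t := by
        have hb₀ : 0 ≤ 1 - 1 / (Fintype.card β : ℝ) ^ 2 := by
          rw [sub_nonneg, div_le_one (by positivity)]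
          exact one_le_pow₀ (by exact_mod_cast hβ)
        exact mul_le_mul_of_nonneg_left
          (pow_le_pow_of_le_one hb₀ (sub_le_self _ (by positivity)) (by omega)) (by positivity)

section Coloring

variable {F : Type*} [Field F] {n : ℕ}

theorem exists_coloring_of_sum_lt_one [Fintype F] (hn : 0 < n)
    (h : ∀ t : ℕ, Fintype.card F ^ 2 ≤ 3 * t →
      (Fintype.card F : ℝ) ^ 2 * (Fintype.card F + 1) * n *
          (1 - 1 / (n : ℝ)) ^ (Fintype.card F - 1) +
        (Fintype.card F : ℝ) ^ 2 * n ^ 2 * (1 - 1 / (n : ℝ) ^ 2) ^ t < 1) :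
    ∃ χ : F × F → Fin n, (∀ p s j, ∃ y, slopeRel s p y ∧ χ y = j) ∧
      ∀ δ : F × F, δ ≠ 0 → ∀ i j, ∃ x, χ x = i ∧ χ (x + δ) = j := by
  classical
  set q := Fintype.card F
  set t := (q ^ 2 + 2) / 3 -- `⌈q² / 3⌉`
  have hcardD : Fintype.card (F × F) = q ^ 2 := by rw [Fintype.card_prod, sq]
  let missesLine : (F × F) × Option F × Fin n → Finset (F × F → Fin n) :=
    fun e => {χ | ∀ y, slopeRel e.2.1 e.1 y → χ y ≠ e.2.2}
  let missesPair : (F × F) × Fin n × Fin n → Finset (F × F → Fin n) :=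
    fun e => {χ | e.1 ≠ 0 ∧ ∀ x, ¬(χ x = e.2.1 ∧ χ (x + e.1) = e.2.2)}
  have hline (e) : (#(missesLine e) : ℝ) = n ^ q ^ 2 * (1 - 1 / (n : ℝ)) ^ (q - 1) := by
    have := card_filter_forall_slopeRel_ne e.2.1 e.1 e.2.2
    rw [Fintype.card_fin] at this
    convert this
  have hpair (e) : (#(missesPair e) : ℝ) ≤ n ^ q ^ 2 * (1 - 1 / (n : ℝ) ^ 2) ^ t := by
    obtain ⟨δ, i, j⟩ := e
    by_cases hδ : δ = 0
    · simp only [missesPair, hδ, ne_eq, not_true_eq_false, false_and, filter_false,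
        card_empty, Nat.cast_zero]
      have : (0 : ℝ) ≤ 1 - 1 / n ^ 2 :=
        sub_nonneg.2 (div_le_one_of_le₀ (one_le_pow₀ (by exact_mod_cast hn)) (by positivity))
      positivity
    simpa [missesPair, hδ, hcardD] using
      card_filter_forall_not_and_add_le hδ i j (t := t) (by rw [hcardD]; omega)
  obtain ⟨χ, hχline, hχpair⟩ := exists_forall_notMem_of_card_le missesLine missesPair
    (fun e => (hline e).le) hpair (by
      have hN : (0 : ℝ) < n ^ q ^ 2 := by positivity
      have hlt := mul_lt_mul_of_pos_left (h t (by omega)) hN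
      simp only [Fintype.card_prod, Fintype.card_option, Fintype.card_fin, Fintype.card_fun,
        hcardD]
      push_cast
      linarith)
  refine ⟨χ, fun p s j => ?_, fun δ hδ i j => ?_⟩
  · by_contra! hmiss
    exact hχline (p, s, j) (by simpa [missesLine] using hmiss)
  · by_contra! hmiss
    exact hχpair (δ, i, j) (by simpa [missesPair, hδ] using hmiss)

theorem isGood_comp_add (χ : F × F → Fin n)
    (hline : ∀ p s j, ∃ y, slopeRel s p y ∧ χ y = j)
    (hdiff : ∀ δ : F × F, δ ≠ 0 → ∀ i j, ∃ x, χ x = i ∧ χ (x + δ) = j) :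
    IsGood fun wz : (F × F) × (F × F) => χ (wz.1 + wz.2) := by
  refine ⟨fun u v huv i j => ?_, fun u v huv i j => ?_, fun u z s j => ?_, fun u z s j => ?_⟩
  · obtain ⟨x, hxi, hxj⟩ := hdiff (v - u) (sub_ne_zero.2 huv.symm) i j
    exact ⟨x - u, by simpa using hxi, by simpa only [add_sub_left_comm] using hxj⟩
  · obtain ⟨x, hxi, hxj⟩ := hdiff (v - u) (sub_ne_zero.2 huv.symm) i j
    exact ⟨x - u, by simpa using hxi, by simpa only [sub_add_comm, add_comm (v - u)] using hxj⟩
  · obtain ⟨y, hy, hyj⟩ := hline (u + z) s j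
    exact ⟨y - z, (slopeRel_add_right s u (y - z) z).1 (by simpa using hy), by simpa using hyj⟩
  · obtain ⟨y, hy, hyj⟩ := hline (z + u) s j
    exact ⟨y - u, (slopeRel_add_right s z (y - u) u).1 (by simpa using hy), by simpa using hyj⟩

end Coloring

section Estimates

open Real

theorem exp_neg_two_mul_le_one_sub {x : ℝ} (hx₀ : 0 ≤ x) (hx : x ≤ 1 / 2) :
    exp (-(2 * x)) ≤ 1 - x := by
  rw [exp_neg, inv_le_iff_one_le_mul₀ (exp_pos _)]
  calc (1 : ℝ) ≤ (1 - x) * (1 + 2 * x) := by nlinarith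
    _ ≤ (1 - x) * exp (2 * x) := by
      gcongr
      · linarith
      · linarith [add_one_le_exp (2 * x)]

theorem sixteen_le_of_mul_le_two_pow {q : ℕ} (hq : 1 ≤ q)
    (h : 32 * q ^ 2 * (q + 1) ≤ 2 ^ (q - 1)) : 16 ≤ q := by
  by_contra! hq16
  interval_cases q <;> omega

variable {q n : ℕ}

theorem exp_neg_two_mul_div_le_one_sub_inv_pow (hn : 2 ≤ n) :
    exp (-(2 * (q / n))) ≤ (1 - 1 / (n : ℝ)) ^ (q - 1) := by
  have hnR : (2 : ℝ) ≤ n := by exact_mod_cast hn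
  calc exp (-(2 * (q / n))) = exp (-(2 * (1 / n))) ^ q := by rw [← exp_nat_mul]; ring_nf
    _ ≤ (1 - 1 / (n : ℝ)) ^ q := by
        gcongr
        exact exp_neg_two_mul_le_one_sub (by positivity)
          (by rw [div_le_div_iff₀ (by positivity) two_pos]; linarith)
    _ ≤ (1 - 1 / (n : ℝ)) ^ (q - 1) := by
        refine pow_le_pow_of_le_one ?_ (sub_le_self _ (by positivity)) (Nat.sub_le q 1)
        rw [sub_nonneg, div_le_one (by positivity)]; linarith

theorem sixteen_le_of_exp_mul_pow_le_one (hq : 1 ≤ q) (hn : 2 ≤ n)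
    (h : 8 * exp 1 * ((q : ℝ) ^ 2 * (q + 1) * n) * (1 - 1 / (n : ℝ)) ^ (q - 1) ≤ 1) :
    16 ≤ q := by
  have hnR : (2 : ℝ) ≤ n := by exact_mod_cast hn
  refine sixteen_le_of_mul_le_two_pow hq ?_
  have hhalf : 8 * exp 1 * ((q : ℝ) ^ 2 * (q + 1) * n) * (1 / 2) ^ (q - 1) ≤ 1 := h.trans' (by
    gcongr
    rw [le_sub_comm, div_le_iff₀ (by positivity)]; linarith)
  rw [one_div_pow, mul_one_div, div_le_one (by positivity)] at hhalf
  have : (32 * q ^ 2 * (q + 1) : ℝ) ≤ 2 ^ (q - 1) :=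
    calc (32 * q ^ 2 * (q + 1) : ℝ) = 16 * 2 * (q ^ 2 * (q + 1)) := by ring
      _ ≤ 8 * exp 1 * n * (q ^ 2 * (q + 1)) := by
          gcongr; nlinarith [add_one_le_exp 1]
      _ ≤ 2 ^ (q - 1) := hhalf.trans_eq' (by ring)
  exact_mod_cast this

theorem six_le_div_of_exp_mul_pow_le_one (hq : 1 ≤ q) (hn : 2 ≤ n)
    (h : 8 * exp 1 * ((q : ℝ) ^ 2 * (q + 1) * n) * (1 - 1 / (n : ℝ)) ^ (q - 1) ≤ 1) :
    6 ≤ (q : ℝ) / n := by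
  have hq16 : (16 : ℝ) ≤ q := by exact_mod_cast sixteen_le_of_exp_mul_pow_le_one hq hn h
  have hnR : (2 : ℝ) ≤ n := by exact_mod_cast hn
  have he11 : exp 1 ^ 11 ≤ 8 * ((q : ℝ) ^ 2 * (q + 1) * n) :=
    calc exp 1 ^ 11 ≤ 2.7182818286 ^ 11 := by gcongr; exact exp_one_lt_d9.le
      _ ≤ 8 * (16 ^ 2 * (16 + 1) * 2) := by norm_num
      _ ≤ 8 * ((q : ℝ) ^ 2 * (q + 1) * n) := by gcongr
  have hK : 8 * exp 1 * ((q : ℝ) ^ 2 * (q + 1) * n) ≤ exp (2 * (q / n)) := by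
    have : 8 * exp 1 * ((q : ℝ) ^ 2 * (q + 1) * n) * exp (-(2 * (q / n))) ≤ 1 :=
      h.trans' (by gcongr; exact exp_neg_two_mul_div_le_one_sub_inv_pow hn)
    rwa [exp_neg, mul_inv_le_iff₀ (exp_pos _), one_mul] at this
  have h12 : exp 12 ≤ exp (2 * (q / n)) :=
    calc exp 12 = exp 1 * exp 1 ^ 11 := by rw [← pow_succ', ← exp_nat_mul]; norm_num
      _ ≤ 8 * exp 1 * ((q : ℝ) ^ 2 * (q + 1) * n) := by nlinarith [exp_pos 1]
      _ ≤ exp (2 * (q / n)) := hK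
  linarith [exp_le_exp.1 h12]

theorem sq_mul_sq_mul_one_sub_inv_sq_pow_le_half (hq : 1 ≤ q) (hn : 2 ≤ n)
    (h : 8 * exp 1 * ((q : ℝ) ^ 2 * (q + 1) * n) * (1 - 1 / (n : ℝ)) ^ (q - 1) ≤ 1)
    {t : ℕ} (ht : q ^ 2 ≤ 3 * t) :
    (q : ℝ) ^ 2 * n ^ 2 * (1 - 1 / (n : ℝ) ^ 2) ^ t ≤ 1 / 2 := by
  set K : ℝ := 8 * exp 1 * ((q : ℝ) ^ 2 * (q + 1) * n)
  have hnR : (2 : ℝ) ≤ n := by exact_mod_cast hn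
  have hy := six_le_div_of_exp_mul_pow_le_one hq hn h
  have hK : K * exp (-(2 * (q / n))) ≤ 1 :=
    h.trans' (by gcongr; exact exp_neg_two_mul_div_le_one_sub_inv_pow hn)
  have hb : (1 - 1 / (n : ℝ) ^ 2) ^ t ≤ exp (-(2 * (q / n))) :=
    calc (1 - 1 / (n : ℝ) ^ 2) ^ t ≤ exp (-(1 / (n : ℝ) ^ 2)) ^ t := by
          gcongr
          · rw [sub_nonneg, div_le_one (by positivity)]; nlinarith
          · exact one_sub_le_exp_neg _
      _ = exp (-(t / (n : ℝ) ^ 2)) := by rw [← exp_nat_mul]; ring_nf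
      _ ≤ exp (-(2 * (q / n))) := by
          have hqt : ((q : ℝ) / n) ^ 2 / 3 ≤ t / (n : ℝ) ^ 2 := by
            rw [div_pow, div_div, div_le_div_iff₀ (by positivity) (by positivity)]
            have : ((q ^ 2 : ℕ) : ℝ) ≤ (3 * t : ℕ) := by exact_mod_cast ht
            push_cast at this
            nlinarith [sq_nonneg (n : ℝ)]
          gcongr
          nlinarith
  have hnq : 2 * ((q : ℝ) ^ 2 * n ^ 2) ≤ K := by
    have : 6 * (n : ℝ) ≤ q := by rwa [le_div_iff₀ (by positivity)] at hy
    calc 2 * ((q : ℝ) ^ 2 * n ^ 2) = 2 * (n : ℝ) * ((q : ℝ) ^ 2 * n) := by ring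
      _ ≤ 8 * exp 1 * (q + 1) * ((q : ℝ) ^ 2 * n) := by
          gcongr <;> linarith [add_one_le_exp 1]
      _ = K := by ring
  calc (q : ℝ) ^ 2 * n ^ 2 * (1 - 1 / (n : ℝ) ^ 2) ^ t
      ≤ (q : ℝ) ^ 2 * n ^ 2 * exp (-(2 * (q / n))) := by gcongr
    _ ≤ K / 2 * exp (-(2 * (q / n))) := by gcongr; linarith
    _ ≤ 1 / 2 := by linarith

end Estimates

theorem stmt9_general (q n : ℕ) (hn : 2 ≤ n)
    (h : Real.exp 1 * (4 * (q : ℝ) ^ 2) * (2 * n * ((q : ℝ) + 1))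
          * (1 - 1 / (n : ℝ)) ^ (q - 1) ≤ 1)
    (F : Type*) [Field F] [Fintype F] (hcard : Fintype.card F = q) :
    ∃ f : (F × F) × (F × F) → Fin n, IsGood f := by
  have hq : 1 ≤ q := hcard ▸ Fintype.card_pos
  have h8 : 8 * Real.exp 1 * ((q : ℝ) ^ 2 * (q + 1) * n) * (1 - 1 / (n : ℝ)) ^ (q - 1) ≤ 1 :=
    h.trans_eq' (by ring)
  have hlines : (q : ℝ) ^ 2 * (q + 1) * n * (1 - 1 / (n : ℝ)) ^ (q - 1) < 1 / 2 := by
    have ha₀ : (0 : ℝ) ≤ 1 - 1 / n := by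
      rw [sub_nonneg, div_le_one (by positivity)]; exact_mod_cast (by omega : 1 ≤ n)
    nlinarith [Real.add_one_le_exp 1, show (0 : ℝ) ≤ (q : ℝ) ^ 2 * (q + 1) * n *
      (1 - 1 / (n : ℝ)) ^ (q - 1) by positivity]
  obtain ⟨χ, hline, hdiff⟩ := exists_coloring_of_sum_lt_one (F := F) (n := n) (by omega)
    fun t ht => by
      rw [hcard] at ht ⊢
      linarith [sq_mul_sq_mul_one_sub_inv_sq_pow_le_half hq hn h8 ht]
  exact ⟨_, isGood_comp_add χ hline hdiff⟩

/-- Local-lemma existence of a good coloring: if `e · 4q² · 2n(q+1) · (1 − 1/n)^(q−1) ≤ 1`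
and moreover `n²(1 − 1/n²)^(q²) ≤ 2n(q+1)(1 − 1/n)^(q−1)`, then a good coloring
`f : D × D → Fin n` exists. -/
theorem stmt9 (q n : ℕ) (hq : IsPrimePow q) (hn : 2 ≤ n)
    (h : Real.exp 1 * (4 * (q : ℝ) ^ 2) * (2 * n * ((q : ℝ) + 1))
          * (1 - 1 / (n : ℝ)) ^ (q - 1) ≤ 1)
    (h' : (n : ℝ) ^ 2 * (1 - 1 / (n : ℝ) ^ 2) ^ (q ^ 2)
          ≤ 2 * n * ((q : ℝ) + 1) * (1 - 1 / (n : ℝ)) ^ (q - 1))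
    (F : Type*) [Field F] [Fintype F] (hcard : Fintype.card F = q) :
    ∃ f : (F × F) × (F × F) → Fin n, IsGood f :=
  stmt9_general q n hn h F hcard
end

section
/- (Main theorem, combinatorial form.) For every ε > 0 there exists N such that for all natural numbers n ≥ N and every prime power q with q ≥ n · (log n)^{1+ε}, there exists a good coloring f : D × D → Fin n. (This good coloring yields a square representation of the relation algebra 𝔏(q,n), so 𝔏(q,n) is representable.) -/
/-!
We show that fewer than `n ^ q⁴` of the colourings `f : D × D → Fin n` fail to be good. For
`u ≠ v` and colours `i, j`, condition (1a) fails only if none of the `q²` independent pairs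
`(f (u, z), f (v, z))` equals `(i, j)`, which happens for a fraction
`(1 - 1/n²)^(q²) ≤ exp (-q²/n²)` of all colourings. Condition (2a) for `u, z, s, j` fails only
if `f (w, z) ≠ j` at all `q - 1` points `w ≠ u` of the line of slope `s` through `u`, a fraction
`≤ exp (-(q - 1)/n)`. Conditions (1b) and (2b) are (1a) and (2a) for the transposed colouring,
so the union bound over the `q⁴n²` and `q⁴(q + 1)n` instances leaves a fraction at most
`2 * unionBound q n ≤ 6 t⁵ n⁶ e^(1 - t)` of bad colourings, where `t = q/n ≥ (log n)^(1+ε)`.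
Once `(log n)^ε ≥ 12` we have `n⁶ ≤ e^(t/2)`, and `t⁵ e^(-t/2) → 0`.
-/

open Function Real Filter

theorem sub_one_pow_le_pow_mul_exp (x : ℝ) (hx : 1 ≤ x) (m : ℕ) :
    (x - 1) ^ m ≤ x ^ m * exp (-(m / x)) := by
  have hbase : x - 1 ≤ x * exp (-(1 / x)) := by
    calc x - 1 = x * (1 - 1 / x) := by field_simp
      _ ≤ x * exp (-(1 / x)) := by gcongr; exact one_sub_le_exp_neg _
  calc (x - 1) ^ m ≤ (x * exp (-(1 / x))) ^ m := by gcongr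
    _ = x ^ m * exp (-(m / x)) := by rw [mul_pow, ← exp_nat_mul, mul_neg, mul_one_div]

section Counting

variable {α β γ δ : Type*} [Finite α] [Finite β] [Finite γ] [Finite δ]

theorem card_subtype_le_sum_card {ι : Type*} [Fintype ι] (P : β → Prop)
    (A : ι → β → Prop) (h : ∀ b, P b → ∃ i, A i b) :
    Nat.card {b // P b} ≤ ∑ i, Nat.card {b // A i b} := by
  rw [← Nat.card_sigma]
  choose i hi using h
  refine Nat.card_le_card_of_injective (fun b => ⟨i b.1 b.2, b.1, hi b.1 b.2⟩)
    fun b b' hbb => Subtype.ext (congrArg (fun x : Σ i, {b // A i b} => x.2.1) hbb)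

theorem card_forall_restrict_ne_le (e : α × δ → β) (he : Injective e) (p : α → δ → γ) :
    Nat.card {f : β → γ // ∀ a, (fun d => f (e (a, d))) ≠ p a} ≤
      (Nat.card γ ^ Nat.card δ - 1) ^ Nat.card α *
        Nat.card γ ^ (Nat.card β - Nat.card α * Nat.card δ) := by
  classical
  have := Fintype.ofFinite α
  have := Fintype.ofFinite β
  have := Fintype.ofFinite γ
  have := Fintype.ofFinite δ
  have hinj : Injective fun f : {f : β → γ // ∀ a, (fun d => f (e (a, d))) ≠ p a} =>
      ((fun a => (⟨fun d => f.1 (e (a, d)), f.2 a⟩ : {g : δ → γ // g ≠ p a})),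
        fun b : {b // b ∉ Set.range e} => f.1 b) := by
    rintro ⟨f, hf⟩ ⟨g, hg⟩ hfg
    simp only [Prod.mk.injEq, funext_iff, Subtype.ext_iff] at hfg
    ext b
    by_cases hb : b ∈ Set.range e
    · obtain ⟨⟨a, d⟩, rfl⟩ := hb
      exact hfg.1 a d
    · exact hfg.2 ⟨b, hb⟩
  have hrange : Fintype.card {b // b ∈ Set.range e} = Fintype.card α * Fintype.card δ := by
    rw [← Fintype.card_prod]
    exact (Fintype.card_congr (Equiv.ofInjective e he)).symm
  simp only [Nat.card_eq_fintype_card]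
  refine (Fintype.card_le_of_injective _ hinj).trans_eq ?_
  simp only [Fintype.card_prod, Fintype.card_pi, Fintype.card_subtype_compl,
    Fintype.card_subtype_eq, hrange, Finset.prod_const, Finset.card_univ]

theorem card_forall_restrict_ne_le_exp [Nonempty γ] (e : α × δ → β) (he : Injective e)
    (p : α → δ → γ) :
    (Nat.card {f : β → γ // ∀ a, (fun d => f (e (a, d))) ≠ p a} : ℝ) ≤
      Nat.card γ ^ Nat.card β * exp (-(Nat.card α / Nat.card γ ^ Nat.card δ)) := by
  have hle : Nat.card α * Nat.card δ ≤ Nat.card β := by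
    simpa using Nat.card_le_card_of_injective e he
  have hx : 1 ≤ Nat.card γ ^ Nat.card δ := Nat.one_le_pow _ _ Nat.card_pos
  calc _ ≤ (((Nat.card γ ^ Nat.card δ - 1) ^ Nat.card α *
        Nat.card γ ^ (Nat.card β - Nat.card α * Nat.card δ) : ℕ) : ℝ) := by
        exact_mod_cast card_forall_restrict_ne_le e he p
    _ = (((Nat.card γ : ℝ) ^ Nat.card δ - 1) ^ Nat.card α *
        (Nat.card γ : ℝ) ^ (Nat.card β - Nat.card α * Nat.card δ)) := by
        push_cast [Nat.cast_sub hx]; ring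
    _ ≤ ((Nat.card γ : ℝ) ^ Nat.card δ) ^ Nat.card α *
        exp (-(Nat.card α / Nat.card γ ^ Nat.card δ)) *
        (Nat.card γ : ℝ) ^ (Nat.card β - Nat.card α * Nat.card δ) := by
        gcongr
        exact sub_one_pow_le_pow_mul_exp _ (by exact_mod_cast hx) _
    _ = _ := by
        rw [mul_right_comm, ← pow_mul, ← pow_add, mul_comm (Nat.card δ),
          Nat.add_sub_cancel' hle]

end Counting

section Slope

variable {F : Type*} [Field F]

def slopeRelEquiv (s : Option F) (u : F × F) :
    {w // slopeRel s u w} ≃ {x : F // x ≠ s.elim u.2 fun _ => u.1} :=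
  match s with
  | none =>
    { toFun := fun w => ⟨w.1.2, w.2.2.symm⟩
      invFun := fun y => ⟨(u.1, y), rfl, y.2.symm⟩
      left_inv := by rintro ⟨⟨a, b⟩, h, -⟩; exact Subtype.ext (Prod.ext h rfl)
      right_inv := fun _ => rfl }
  | some s =>
    { toFun := fun w => ⟨w.1.1, w.2.1.symm⟩
      invFun := fun x => ⟨(x, u.2 + s * (x - u.1)), x.2.symm, by ring⟩
      left_inv := by
        rintro ⟨⟨a, b⟩, -, h⟩
        exact Subtype.ext (Prod.ext rfl (by dsimp only at h ⊢; linear_combination -h))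
      right_inv := fun _ => rfl }

theorem card_slopeRel [Finite F] (s : Option F) (u : F × F) :
    Nat.card {w // slopeRel s u w} = Nat.card F - 1 := by
  classical
  have := Fintype.ofFinite F
  rw [Nat.card_congr (slopeRelEquiv s u), Nat.card_eq_fintype_card, Nat.card_eq_fintype_card,
    Fintype.card_subtype_compl, Fintype.card_subtype_eq]

end Slope

section Events

variable {D : Type*} [Finite D] {n : ℕ}

theorem card_violating_pair_le (hn : 0 < n) (u v : D) (i j : Fin n) :
    (Nat.card {f : D × D → Fin n // u ≠ v ∧ ∀ z, ¬(f (u, z) = i ∧ f (v, z) = j)} : ℝ) ≤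
      n ^ Nat.card D ^ 2 * exp (-(Nat.card D / n ^ 2)) := by
  have : Nonempty (Fin n) := ⟨⟨0, hn⟩⟩
  by_cases huv : u = v
  · simp only [huv, ne_eq, not_true_eq_false, false_and, Nat.card_of_isEmpty, Nat.cast_zero]
    positivity
  let e : D × Bool → D × D := fun x => (cond x.2 v u, x.1)
  have he : Injective e := by
    rintro ⟨z, b⟩ ⟨z', b'⟩ h
    simp only [e, Prod.mk.injEq] at h
    cases b <;> cases b' <;> simp_all [eq_comm]
  calc _ ≤ (Nat.card {f : D × D → Fin n //
        ∀ z, (fun b => f (e (z, b))) ≠ fun b => cond b j i} : ℝ) := by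
        refine Nat.cast_le.mpr (Nat.card_mono (Set.toFinite _) fun f hf z hz => ?_)
        exact hf.2 z ⟨congrFun hz false, congrFun hz true⟩
    _ ≤ _ := card_forall_restrict_ne_le_exp e he _
    _ = _ := by
        simp only [Nat.card_prod, Nat.card_eq_fintype_card, Fintype.card_fin, Fintype.card_bool]
        ring_nf

theorem card_violating_line_le (hn : 0 < n) (P : D → Prop) (z : D) (j : Fin n) :
    (Nat.card {f : D × D → Fin n // ∀ w, P w → f (w, z) ≠ j} : ℝ) ≤
      n ^ Nat.card D ^ 2 * exp (-(Nat.card {w // P w} / n)) := by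
  have : Nonempty (Fin n) := ⟨⟨0, hn⟩⟩
  let e : {w // P w} × Unit → D × D := fun x => (x.1.1, z)
  have he : Injective e := fun x y h => Prod.ext (Subtype.ext (Prod.ext_iff.mp h).1) rfl
  calc _ ≤ (Nat.card {f : D × D → Fin n //
        ∀ w : {w // P w}, (fun _ => f (e (w, ()))) ≠ fun _ => j} : ℝ) := by
        refine Nat.cast_le.mpr (Nat.card_mono (Set.toFinite _) fun f hf w hw => ?_)
        exact hf w.1 w.2 (congrFun hw ())
    _ ≤ _ := card_forall_restrict_ne_le_exp e he _
    _ = _ := by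
        simp only [Nat.card_prod, Nat.card_eq_fintype_card, Fintype.card_fin, Fintype.card_unit]
        ring_nf

end Events

section HalfGood

variable {F : Type*} [Field F] {n : ℕ}

def IsHalfGood (f : (F × F) × (F × F) → Fin n) : Prop :=
  (∀ u v : F × F, u ≠ v → ∀ i j : Fin n, ∃ z, f (u, z) = i ∧ f (v, z) = j) ∧
  ∀ u z : F × F, ∀ s : Option F, ∀ j : Fin n, ∃ w, slopeRel s u w ∧ f (w, z) = j

theorem isGood_iff_isHalfGood (f : (F × F) × (F × F) → Fin n) :
    IsGood f ↔ IsHalfGood f ∧ IsHalfGood (f ∘ Prod.swap) := by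
  simp only [IsGood, IsHalfGood, comp_apply, Prod.swap_prod_mk]
  exact ⟨fun ⟨h1, h2, h3, h4⟩ => ⟨⟨h1, h3⟩, h2, fun u z => h4 z u⟩,
    fun ⟨⟨h1, h3⟩, h2, h4⟩ => ⟨h1, h2, h3, fun u z => h4 z u⟩⟩

noncomputable def unionBound (q n : ℝ) : ℝ :=
  q ^ 4 * n ^ 2 * exp (-(q ^ 2 / n ^ 2)) + q ^ 4 * (q + 1) * n * exp (-((q - 1) / n))

theorem card_not_isHalfGood_comp_swap :
    Nat.card {f : (F × F) × (F × F) → Fin n // ¬IsHalfGood (f ∘ Prod.swap)} =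
      Nat.card {f : (F × F) × (F × F) → Fin n // ¬IsHalfGood f} :=
  Nat.card_congr <| Equiv.subtypeEquiv
    (Equiv.arrowCongr (Equiv.prodComm (F × F) (F × F)) (Equiv.refl (Fin n))) fun _ => Iff.rfl

variable [Fintype F]

theorem card_not_isHalfGood_le (hn : 0 < n) :
    (Nat.card {f : (F × F) × (F × F) → Fin n // ¬IsHalfGood f} : ℝ) ≤
      n ^ Fintype.card F ^ 4 * unionBound (Fintype.card F) n := by
  have hq : 1 ≤ Fintype.card F := Fintype.card_pos
  have hD : Nat.card (F × F) = Fintype.card F ^ 2 := by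
    rw [Nat.card_prod, Nat.card_eq_fintype_card, sq]
  let pairBad (x : (F × F) × (F × F) × Fin n × Fin n) (f : (F × F) × (F × F) → Fin n) :=
    x.1 ≠ x.2.1 ∧ ∀ z, ¬(f (x.1, z) = x.2.2.1 ∧ f (x.2.1, z) = x.2.2.2)
  let lineBad (y : (F × F) × (F × F) × Option F × Fin n) (f : (F × F) × (F × F) → Fin n) :=
    ∀ w, slopeRel y.2.2.1 y.1 w → f (w, y.2.1) ≠ y.2.2.2
  have hcover (f) (hf : ¬IsHalfGood f) : ∃ i, Sum.elim pairBad lineBad i f := by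
    rw [IsHalfGood, not_and_or] at hf
    push Not at hf
    rcases hf with ⟨u, v, huv, i, j, h⟩ | ⟨u, z, s, j, h⟩
    · exact ⟨.inl (u, v, i, j), huv, fun z hz => h z hz.1 hz.2⟩
    · exact ⟨.inr (u, z, s, j), h⟩
  calc _ ≤ ∑ i, (Nat.card {f // Sum.elim pairBad lineBad i f} : ℝ) := by
        exact_mod_cast card_subtype_le_sum_card _ _ hcover
    _ ≤ ∑ x : (F × F) × (F × F) × Fin n × Fin n,
          (n : ℝ) ^ Fintype.card F ^ 4 * exp (-(Fintype.card F ^ 2 / n ^ 2)) +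
        ∑ y : (F × F) × (F × F) × Option F × Fin n,
          (n : ℝ) ^ Fintype.card F ^ 4 * exp (-((Fintype.card F - 1) / n)) := by
        rw [Fintype.sum_sum_type]
        gcongr with x _ y
        · have := card_violating_pair_le hn x.1 x.2.1 x.2.2.1 x.2.2.2
          rwa [hD, ← pow_mul, Nat.cast_pow] at this
        · have := card_violating_line_le hn (slopeRel y.2.2.1 y.1) y.2.1 y.2.2.2
          rwa [hD, ← pow_mul, card_slopeRel, Nat.card_eq_fintype_card (α := F), Nat.cast_sub hq,
            Nat.cast_one] at this
    _ = _ := by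
        simp only [Finset.sum_const, Finset.card_univ, Fintype.card_prod, Fintype.card_option,
          Fintype.card_fin, nsmul_eq_mul, unionBound]
        push_cast
        ring

theorem exists_isGood_of_two_mul_unionBound_lt (hn : 0 < n)
    (h : 2 * unionBound (Fintype.card F) n < 1) :
    ∃ f : (F × F) × (F × F) → Fin n, IsGood f := by
  have hbound (b : Bool) : (Nat.card {f : (F × F) × (F × F) → Fin n //
      ¬IsHalfGood (cond b (f ∘ Prod.swap) f)} : ℝ) ≤
      n ^ Fintype.card F ^ 4 * unionBound (Fintype.card F) n := by
    cases b
    · exact card_not_isHalfGood_le hn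
    · simp only [cond_true, card_not_isHalfGood_comp_swap]
      exact card_not_isHalfGood_le hn
  have hcover (f : (F × F) × (F × F) → Fin n) (hf : ¬IsGood f) :
      ∃ b, ¬IsHalfGood (cond b (f ∘ Prod.swap) f) := by
    rw [isGood_iff_isHalfGood, not_and_or] at hf
    exact hf.elim (⟨false, ·⟩) (⟨true, ·⟩)
  have hlt : (Nat.card {f : (F × F) × (F × F) → Fin n // ¬IsGood f} : ℝ) <
      Nat.card ((F × F) × (F × F) → Fin n) :=
    calc _ ≤ ∑ b, (Nat.card {f : (F × F) × (F × F) → Fin n //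
            ¬IsHalfGood (cond b (f ∘ Prod.swap) f)} : ℝ) := by
          exact_mod_cast card_subtype_le_sum_card _ _ hcover
      _ ≤ n ^ Fintype.card F ^ 4 * (2 * unionBound (Fintype.card F) n) := by
          simp only [Fintype.sum_bool]
          linarith [hbound true, hbound false]
      _ < n ^ Fintype.card F ^ 4 := by
          have : (0 : ℝ) < n ^ Fintype.card F ^ 4 := by positivity
          nlinarith
      _ = _ := by
          rw [Nat.card_fun, Nat.card_prod, Nat.card_prod, Nat.card_eq_fintype_card (α := F),
            Nat.card_eq_fintype_card (α := Fin n), Fintype.card_fin]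
          push_cast
          ring
  by_contra! hbad
  exact hlt.ne (congrArg _ (Nat.card_congr (Equiv.subtypeUnivEquiv hbad)))

end HalfGood

theorem two_mul_unionBound_le {q n : ℝ} (hn : 1 ≤ n) (hnq : n ≤ q) :
    2 * unionBound q n ≤ 6 * (q / n) ^ 5 * n ^ 6 * exp (1 - q / n) := by
  set t := q / n with ht
  have hq : q = t * n := by rw [ht, div_mul_cancel₀ _ (by positivity)]
  have ht1 : 1 ≤ t := by rw [ht, le_div_iff₀ (by positivity)]; linarith
  have hpair : q ^ 4 * n ^ 2 * exp (-(q ^ 2 / n ^ 2)) ≤ t ^ 5 * n ^ 6 * exp (1 - t) := by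
    have hq2 : q ^ 2 / n ^ 2 = t ^ 2 := by rw [ht, div_pow]
    rw [hq2, hq]
    gcongr ?_ * exp ?_
    · calc (t * n) ^ 4 * n ^ 2 = t ^ 4 * n ^ 6 := by ring
        _ ≤ t ^ 5 * n ^ 6 := by gcongr; norm_num
    · nlinarith
  have hline :
      q ^ 4 * (q + 1) * n * exp (-((q - 1) / n)) ≤ 2 * (t ^ 5 * n ^ 6 * exp (1 - t)) := by
    have hn0 : 0 < n := by linarith
    have hq0 : 0 < q := by linarith
    have hqn : (q - 1) / n = t - 1 / n := by rw [ht, sub_div]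
    have : 1 / n ≤ 1 := by rw [div_le_one hn0]; exact hn
    calc q ^ 4 * (q + 1) * n * exp (-((q - 1) / n)) ≤ q ^ 4 * (2 * q) * n * exp (1 - t) := by
          gcongr
          · linarith
          · rw [hqn]; linarith
      _ = 2 * (t ^ 5 * n ^ 6 * exp (1 - t)) := by rw [hq]; ring
  rw [unionBound]
  linarith

theorem mul_pow_mul_exp_lt_one {n t : ℝ} (hn : 0 < n) (ht0 : 0 ≤ t) (hlog : 12 * log n ≤ t)
    (ht : 6 * exp 1 * t ^ 5 < exp (t / 2)) : 6 * t ^ 5 * n ^ 6 * exp (1 - t) < 1 := by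
  have hn6 : n ^ 6 ≤ exp (t / 2) := by
    rw [← exp_log hn, ← exp_nat_mul, exp_le_exp]
    push_cast
    linarith
  calc 6 * t ^ 5 * n ^ 6 * exp (1 - t) ≤ 6 * t ^ 5 * exp (t / 2) * exp (1 - t) := by gcongr
    _ = 6 * exp 1 * t ^ 5 / exp (t / 2) := by
        rw [eq_div_iff (exp_pos _).ne', mul_assoc, ← exp_add, mul_assoc _ (exp _), ← exp_add]
        ring_nf
    _ < 1 := (div_lt_one (exp_pos _)).mpr ht

theorem eventually_mul_pow_lt_exp :
    ∀ᶠ t : ℝ in atTop, 1 ≤ t ∧ 6 * exp 1 * t ^ 5 < exp (t / 2) := by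
  have hc : 0 < 1 / (12 * exp 1) := by positivity
  filter_upwards [eventually_ge_atTop 1,
    (isLittleO_pow_exp_pos_mul_atTop 5 (by norm_num : (0 : ℝ) < 1 / 2)).bound hc] with t ht1 ht
  refine ⟨ht1, ?_⟩
  rw [Real.norm_eq_abs, Real.norm_eq_abs, abs_of_nonneg (by positivity),
    abs_of_pos (exp_pos _)] at ht
  have := exp_pos (t / 2)
  calc 6 * exp 1 * t ^ 5 ≤ 6 * exp 1 * (1 / (12 * exp 1) * exp (1 / 2 * t)) := by gcongr
    _ = exp (t / 2) / 2 := by field_simp; ring_nf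
    _ < exp (t / 2) := by linarith

theorem eventually_log_rpow {ε : ℝ} (hε : 0 < ε) (T : ℝ) :
    ∀ᶠ n : ℕ in atTop, 0 < n ∧ 12 * log n ≤ log n ^ (1 + ε) ∧ T ≤ log n ^ (1 + ε) := by
  have hlog : Tendsto (fun n : ℕ => log n) atTop atTop :=
    tendsto_log_atTop.comp tendsto_natCast_atTop_atTop
  filter_upwards [eventually_gt_atTop 0, hlog.eventually_ge_atTop 1,
    ((tendsto_rpow_atTop hε).comp hlog).eventually_ge_atTop 12,
    ((tendsto_rpow_atTop (by linarith : 0 < 1 + ε)).comp hlog).eventually_ge_atTop T]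
    with n hn h1 hε12 hT
  refine ⟨hn, ?_, hT⟩
  rw [rpow_add (by linarith), rpow_one]
  linarith [mul_le_mul_of_nonneg_left (show (12 : ℝ) ≤ log n ^ ε from hε12)
    (by linarith : (0 : ℝ) ≤ log n)]

/-- Main theorem, combinatorial form: for every `ε > 0` there is `N` such that for all
`n ≥ N` and every prime power `q ≥ n (log n)^(1+ε)`, a good coloring
`f : D × D → Fin n` exists (yielding a representation of `𝔏(q,n)`). -/
theorem stmt13 (ε : ℝ) (hε : 0 < ε) :
    ∃ N : ℕ, ∀ n : ℕ, N ≤ n → ∀ q : ℕ, IsPrimePow q →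
      (n : ℝ) * Real.log n ^ (1 + ε) ≤ q →
      ∀ (F : Type) [Field F] [Fintype F], Fintype.card F = q →
        ∃ f : (F × F) × (F × F) → Fin n, IsGood f := by
  obtain ⟨T, hT⟩ := eventually_atTop.1 eventually_mul_pow_lt_exp
  obtain ⟨N, hN⟩ := eventually_atTop.1 (eventually_log_rpow hε T)
  refine ⟨N, fun n hn q _ hq F _ _ hF => ?_⟩
  obtain ⟨hn0, h12, hTle⟩ := hN n hn
  have hn1 : (1 : ℝ) ≤ n := by exact_mod_cast hn0
  have hlog : log n ^ (1 + ε) ≤ q / n := (le_div_iff₀ (by positivity)).2 (by linarith)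
  obtain ⟨ht1, hexp⟩ := hT (q / n) (hTle.trans hlog)
  refine exists_isGood_of_two_mul_unionBound_lt hn0 ?_
  rw [hF]
  calc 2 * unionBound q n ≤ 6 * (q / n) ^ 5 * n ^ 6 * exp (1 - q / n) :=
        two_mul_unionBound_le hn1 ((one_le_div (by positivity)).1 ht1)
    _ < 1 := mul_pow_mul_exp_lt_one (by positivity) (by linarith) (by linarith) hexp
end
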